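/- Quantitative subject reduction: let π = Δ ⊢ M : α. (1) If M → N without using +-reductions, then there is π′ = Δ ⊢ N : α with |π′| = |π| − 1. (2) If M reduces by a +-reduction to N₁ and to N₂ (the two contracta of a + redex), then there is π′ with either π′ = Δ ⊢ N₁ : α or π′ = Δ ⊢ N₂ : α, and |π′| = |π| − 1. -/

import Mathlib

-- Computational and parallel types
mutual
  inductive CTy : Type
    | one : CTy
    | tens : CTy → CTy → CTy
    | arr : CTy → PTy → CTy
  inductive PTy : Type
    | ofC : CTy → PTy
    | par : PTy → PTy → PTy
end

-- Type equivalence: AC of ⊗ and ⅋, 1 neutral for ⊗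
mutual
  inductive CEq : CTy → CTy → Prop
    | refl (τ) : CEq τ τ
    | symm : CEq τ ρ → CEq ρ τ
    | trans : CEq τ ρ → CEq ρ σ → CEq τ σ
    | comm (τ ρ) : CEq (.tens τ ρ) (.tens ρ τ)
    | assoc (τ ρ σ) : CEq (.tens (.tens τ ρ) σ) (.tens τ (.tens ρ σ))
    | unit (τ) : CEq (.tens τ .one) τ
    | tensCongr : CEq τ τ' → CEq ρ ρ' → CEq (.tens τ ρ) (.tens τ' ρ')
    | arrCongr : CEq τ τ' → PEq α α' → CEq (.arr τ α) (.arr τ' α')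
  inductive PEq : PTy → PTy → Prop
    | refl (α) : PEq α α
    | symm : PEq α β → PEq β α
    | trans : PEq α β → PEq β γ → PEq α γ
    | comm (α β) : PEq (.par α β) (.par β α)
    | assoc (α β γ) : PEq (.par (.par α β) γ) (.par α (.par β γ))
    | parCongr : PEq α α' → PEq β β' → PEq (.par α β) (.par α' β')
    | ofC : CEq τ τ' → PEq (.ofC τ) (.ofC τ')
end

def Ctx : Type := ℕ → CTy
def Ctx.empty : Ctx := fun _ => CTy.one
def Ctx.tens (Γ Δ : Ctx) : Ctx := fun n => CTy.tens (Γ n) (Δ n)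
def Ctx.single (x : ℕ) (τ : CTy) : Ctx := fun n => if n = x then τ else CTy.one
def Ctx.cons (τ : CTy) (Γ : Ctx) : Ctx := fun n =>
  match n with
  | 0 => τ
  | n+1 => Γ n
def CtxEq (Γ Δ : Ctx) : Prop := ∀ n, CEq (Γ n) (Δ n)

def tensList (l : List CTy) : CTy := l.foldr CTy.tens CTy.one
def tensFin (n : ℕ) (f : Fin n → CTy) : CTy := tensList (List.ofFn f)
def tensCtxFin (n : ℕ) (Δ : Fin n → Ctx) : Ctx := fun x => tensFin n (fun i => Δ i x)

def parList : List PTy → PTy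
  | [] => PTy.ofC CTy.one
  | [α] => α
  | α :: β :: rest => PTy.par α (parList (β :: rest))

def parFin (n : ℕ) (f : Fin n → PTy) : PTy := parList (List.ofFn f)

/-- ⅋ᵏ1 : the par of k copies of 1 (left associated); junk value at 0. -/
def parOnes : ℕ → PTy
  | 0 => PTy.ofC CTy.one
  | 1 => PTy.ofC CTy.one
  | n+2 => PTy.par (parOnes (n+1)) (PTy.ofC CTy.one)

/-- Terms of Λ₊∥ in de Bruijn notation. -/
inductive Tm : Type
  | var : ℕ → Tm
  | lam : Tm → Tm
  | app : Tm → Tm → Tm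
  | plus : Tm → Tm → Tm
  | par : Tm → Tm → Tm

def IsValue : Tm → Prop
  | .var _ => True
  | .lam _ => True
  | _ => False

def IsPar : Tm → Prop
  | .par _ _ => True
  | _ => False

def shiftTm (c : ℕ) : Tm → Tm
  | .var n => if n < c then .var n else .var (n+1)
  | .lam M => .lam (shiftTm (c+1) M)
  | .app M N => .app (shiftTm c M) (shiftTm c N)
  | .plus M N => .plus (shiftTm c M) (shiftTm c N)
  | .par M N => .par (shiftTm c M) (shiftTm c N)

/-- Capture-avoiding substitution `M[V/k]` (de Bruijn). -/
def substTm : Tm → ℕ → Tm → Tm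
  | .var n, k, V => if n = k then V else if k < n then .var (n-1) else .var n
  | .lam M, k, V => .lam (substTm M (k+1) (shiftTm 0 V))
  | .app M N, k, V => .app (substTm M k V) (substTm N k V)
  | .plus M N, k, V => .plus (substTm M k V) (substTm N k V)
  | .par M N, k, V => .par (substTm M k V) (substTm N k V)

def closedUnder : ℕ → Tm → Prop
  | d, .var n => n < d
  | d, .lam M => closedUnder (d+1) M
  | d, .app M N => closedUnder d M ∧ closedUnder d N
  | d, .plus M N => closedUnder d M ∧ closedUnder d N
  | d, .par M N => closedUnder d M ∧ closedUnder d N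

def Closed (M : Tm) : Prop := closedUnder 0 M

/-- One-step reduction; the boolean flag records whether a +-reduction is used. -/
inductive Step : Bool → Tm → Tm → Prop
  | beta {M V} : IsValue V → Step false (.app (.lam M) V) (substTm M 0 V)
  | plusL (M N) : Step true (.plus M N) M
  | plusR (M N) : Step true (.plus M N) N
  | parAppL (M N P) : Step false (.app (.par M N) P) (.par (.app M P) (.app N P))
  | parAppR {V} (M N) : IsValue V → Step false (.app V (.par M N)) (.par (.app V M) (.app V N))
  | parL {b M M'} (N) : Step b M M' → Step b (.par M N) (.par M' N)
  | parR {b N N'} (M) : Step b N N' → Step b (.par M N) (.par M N')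
  | appL {b M M'} (N) : Step b M M' → ¬ IsPar M → Step b (.app M N) (.app M' N)
  | appR {b M M' V} : IsValue V → Step b M M' → ¬ IsPar M → Step b (.app V M) (.app V M')

/-- The two contracta of a single +-redex, reduced in context. -/
inductive PlusPair : Tm → Tm → Tm → Prop
  | base (M N) : PlusPair (.plus M N) M N
  | parL {M M₁ M₂} (N) : PlusPair M M₁ M₂ → PlusPair (.par M N) (.par M₁ N) (.par M₂ N)
  | parR {N N₁ N₂} (M) : PlusPair N N₁ N₂ → PlusPair (.par M N) (.par M N₁) (.par M N₂)
  | appL {M M₁ M₂} (N) : PlusPair M M₁ M₂ → ¬ IsPar M → PlusPair (.app M N) (.app M₁ N) (.app M₂ N)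
  | appR {M M₁ M₂ V} : IsValue V → PlusPair M M₁ M₂ → ¬ IsPar M → PlusPair (.app V M) (.app V M₁) (.app V M₂)

/-- n-step reduction. -/
inductive Steps : ℕ → Tm → Tm → Prop
  | refl (M) : Steps 0 M M
  | head {b M N P n} : Step b M N → Steps n N P → Steps (n+1) M P

/-- A closed term converges iff it reduces to a parallel composition of values. -/
def Converges (M : Tm) : Prop :=
  ∃ (n : ℕ) (V : Tm) (Vs : List Tm), IsValue V ∧ (∀ W ∈ Vs, IsValue W) ∧
    Steps n M (Vs.foldl Tm.par V)

/-- Typing derivations, indexed by the measure |π|. -/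
inductive Deriv : Ctx → Tm → PTy → ℕ → Prop
  | ax (x : ℕ) (τ : CTy) : Deriv (Ctx.single x τ) (.var x) (.ofC τ) 0
  | lamI (n : ℕ) (Δ : Fin n → Ctx) (τ : Fin n → CTy) (α : Fin n → PTy) (ms : Fin n → ℕ)
      (M : Tm) :
      (∀ i, Deriv (Ctx.cons (τ i) (Δ i)) M (α i) (ms i)) →
      Deriv (tensCtxFin n Δ) (.lam M)
        (.ofC (tensFin n (fun i => .arr (τ i) (α i)))) (∑ i, ms i)
  | appE (k : ℕ) (hk : 0 < k) (nf : Fin k → ℕ) (hn : ∀ i, 0 < nf i)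
      (τ : ∀ i : Fin k, Fin (nf i) → CTy) (α : ∀ i : Fin k, Fin (nf i) → PTy)
      (Δ : Ctx) (Γ : Fin k → Ctx) (m0 : ℕ) (ms : Fin k → ℕ) (M N : Tm) :
      Deriv Δ M (parFin k (fun i => .ofC (tensFin (nf i) (fun j => .arr (τ i j) (α i j))))) m0 →
      (∀ i, Deriv (Γ i) N (parFin (nf i) (fun j => .ofC (τ i j))) (ms i)) →
      Deriv (Ctx.tens Δ (tensCtxFin k Γ)) (.app M N)
        (parFin k (fun i => parFin (nf i) (α i)))
        ((m0 + (∑ i, ms i) + (∑ i, 2 * nf i)) - 1)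
  | plusL {Δ M α m} (N) : Deriv Δ M α m → Deriv Δ (.plus M N) α (m+1)
  | plusR {Δ N α m} (M) : Deriv Δ N α m → Deriv Δ (.plus M N) α (m+1)
  | parI {Δ Γ M N α β m m'} : Deriv Δ M α m → Deriv Γ N β m' →
      Deriv (Ctx.tens Δ Γ) (.par M N) (.par α β) (m + m')
  | eqv {Γ Γ' M α α' m} : Deriv Γ M α m → CtxEq Γ Γ' → PEq α α' → Deriv Γ' M α' m

def deltaTm : Tm := .lam (.app (.var 0) (.var 0))
def OmegaTm : Tm := .app deltaTm deltaTm
def Idt : Tm := .lam (.var 0)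
def dstarTm : Tm := .lam (.lam (.app (.var 1) (.var 1)))
def YstarTm : Tm := .app dstarTm dstarTm

/-!
Types are compared through normal forms: up to `CEq` a `⊗`-type is determined by the multiset
of its arrow factors, each up to equivalence of domain and codomain, and up to `PEq` a
`⅋`-type by the multiset of its components. Hence the premises of a derivation, read off by
inversion, can be permuted and split along any splitting of the type. A value has a
`⊗`-type, and its derivation splits along every `⊗` with additive measure, so substituting a
value adds the measures: `|π[V/x]| = |π| + |V|`.

A `β`-step therefore removes one `⊸E` over a single arrow, of cost `2·1 - 1 = 1`; a
`∥`-commutation splits one `⊸E` into two, paying the `- 1` twice; a `+`-step removes one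
`+`-rule. The congruence rules pass the decrease through `∥` and application.
-/

theorem Multiset.Rel.symm_of {α : Type*} {r : α → α → Prop} (hr : ∀ {a b}, r a b → r b a)
    {s t : Multiset α} (h : Multiset.Rel r s t) : Multiset.Rel r t s :=
  (Multiset.rel_flip.mpr h).mono fun _ _ _ _ hab => hr hab

theorem Multiset.rel_singleton_iff {α β : Type*} {r : α → β → Prop} {a : α} {b : β} :
    Multiset.Rel r {a} {b} ↔ r a b := by
  rw [← Multiset.cons_zero, Multiset.rel_cons_left]
  simp [eq_comm (a := ({b} : Multiset β))]

theorem Multiset.exists_perm_append_of_coe_eq_add {α : Type*} {l : List α} {s t : Multiset α}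
    (h : (l : Multiset α) = s + t) :
    ∃ l₁ l₂, l.Perm (l₁ ++ l₂) ∧ (l₁ : Multiset α) = s ∧ (l₂ : Multiset α) = t :=
  ⟨s.toList, t.toList, Multiset.coe_eq_coe.mp (by rw [h, ← Multiset.coe_add]; simp), by simp,
    by simp⟩

theorem List.exists_perm_append_of_rel_map_add {ι α β : Type*} {r : α → β → Prop} {f : ι → α}
    {L : List ι} {s t : Multiset β} (h : Multiset.Rel r (L.map f : Multiset α) (s + t)) :
    ∃ L₁ L₂, L.Perm (L₁ ++ L₂) ∧ Multiset.Rel r (L₁.map f : Multiset α) s ∧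
      Multiset.Rel r (L₂.map f : Multiset α) t := by
  rw [← Multiset.map_coe, Multiset.rel_map_left, Multiset.rel_add_right] at h
  obtain ⟨u, v, hu, hv, e⟩ := h
  obtain ⟨L₁, L₂, p, rfl, rfl⟩ := Multiset.exists_perm_append_of_coe_eq_add e
  refine ⟨L₁, L₂, p, ?_, ?_⟩ <;> rwa [← Multiset.map_coe, Multiset.rel_map_left]

namespace CtxEq

theorem refl (Γ : Ctx) : CtxEq Γ Γ := fun _ => .refl _

theorem symm {Γ Δ : Ctx} (h : CtxEq Γ Δ) : CtxEq Δ Γ := fun n => (h n).symm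

theorem trans {Γ Δ Θ : Ctx} (h : CtxEq Γ Δ) (h' : CtxEq Δ Θ) : CtxEq Γ Θ :=
  fun n => (h n).trans (h' n)

theorem tens {Γ Γ' Δ Δ' : Ctx} (h : CtxEq Γ Γ') (h' : CtxEq Δ Δ') :
    CtxEq (Γ.tens Δ) (Γ'.tens Δ') :=
  fun n => .tensCongr (h n) (h' n)

end CtxEq

theorem CEq.one_tens (τ : CTy) : CEq (.tens .one τ) τ := (CEq.comm _ _).trans (CEq.unit τ)

theorem CEq.tens_tens_tens_comm (a b c d : CTy) :
    CEq (.tens (.tens a b) (.tens c d)) (.tens (.tens a c) (.tens b d)) := by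
  refine (CEq.assoc a b _).trans (CEq.trans ?_ (CEq.assoc a c _).symm)
  refine .tensCongr (.refl a) ?_
  exact ((CEq.assoc b c d).symm.trans (.tensCongr (.comm b c) (.refl d))).trans (.assoc c b d)

theorem CtxEq.tens_tens_tens_comm (A B C D : Ctx) :
    CtxEq ((A.tens B).tens (C.tens D)) ((A.tens C).tens (B.tens D)) :=
  fun _ => CEq.tens_tens_tens_comm _ _ _ _

instance : IsTrans CTy CEq := ⟨fun _ _ _ => CEq.trans⟩

-- Only arrows occur as factors; the clause `σ = ρ` merely makes the relation reflexive.
def ArrowEq : CTy → CTy → Prop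
  | .arr a α, .arr b β => CEq a b ∧ PEq α β
  | σ, ρ => σ = ρ

namespace ArrowEq

theorem refl : ∀ σ, ArrowEq σ σ
  | .one | .tens _ _ => rfl
  | .arr _ _ => ⟨.refl _, .refl _⟩

theorem symm {σ ρ : CTy} (h : ArrowEq σ ρ) : ArrowEq ρ σ := by
  cases σ <;> cases ρ <;> simp_all [ArrowEq]
  exact ⟨h.1.symm, h.2.symm⟩

theorem trans {σ ρ χ : CTy} (h : ArrowEq σ ρ) (h' : ArrowEq ρ χ) : ArrowEq σ χ := by
  cases σ <;> cases ρ <;> cases χ <;> simp_all [ArrowEq]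
  exact ⟨h.1.trans h'.1, h.2.trans h'.2⟩

theorem ceq {σ ρ : CTy} (h : ArrowEq σ ρ) : CEq σ ρ := by
  cases σ <;> cases ρ <;> simp_all [ArrowEq]
  all_goals first | exact .refl _ | exact .arrCongr h.1 h.2

instance : IsTrans CTy ArrowEq := ⟨fun _ _ _ => trans⟩

end ArrowEq

def CTy.factors : CTy → Multiset CTy
  | .one => 0
  | .tens σ ρ => σ.factors + ρ.factors
  | .arr a α => {.arr a α}

def PTy.components : PTy → Multiset CTy
  | .ofC τ => {τ}
  | .par α β => α.components + β.components

mutual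

theorem CEq.rel_factors {σ ρ : CTy} : CEq σ ρ → Multiset.Rel ArrowEq σ.factors ρ.factors
  | .refl _ => Multiset.rel_refl_of_refl_on fun _ _ => .refl _
  | .symm h => h.rel_factors.symm_of ArrowEq.symm
  | .trans h h' => h.rel_factors.trans _ h'.rel_factors
  | .comm σ ρ => by
    rw [CTy.factors, CTy.factors, add_comm]
    exact Multiset.rel_refl_of_refl_on fun _ _ => .refl _
  | .assoc σ ρ χ => by
    rw [CTy.factors, CTy.factors, CTy.factors, CTy.factors, add_assoc]
    exact Multiset.rel_refl_of_refl_on fun _ _ => .refl _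
  | .unit σ => by
    rw [CTy.factors, CTy.factors, add_zero]
    exact Multiset.rel_refl_of_refl_on fun _ _ => .refl _
  | .tensCongr h h' => h.rel_factors.add h'.rel_factors
  | .arrCongr h h' => .cons (show ArrowEq (.arr _ _) (.arr _ _) from ⟨h, h'⟩) .zero

theorem PEq.rel_components {α β : PTy} : PEq α β → Multiset.Rel CEq α.components β.components
  | .refl _ => Multiset.rel_refl_of_refl_on fun _ _ => .refl _
  | .symm h => h.rel_components.symm_of CEq.symm
  | .trans h h' => h.rel_components.trans _ h'.rel_components
  | .comm α β => by
    rw [PTy.components, PTy.components, add_comm]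
    exact Multiset.rel_refl_of_refl_on fun _ _ => .refl _
  | .assoc α β γ => by
    rw [PTy.components, PTy.components, PTy.components, PTy.components, add_assoc]
    exact Multiset.rel_refl_of_refl_on fun _ _ => .refl _
  | .parCongr h h' => h.rel_components.add h'.rel_components
  | .ofC h => .cons h .zero

end

theorem tensList_cons (a : CTy) (l : List CTy) : tensList (a :: l) = .tens a (tensList l) := rfl

theorem CEq.tensList_append : ∀ l l' : List CTy,
    CEq (tensList (l ++ l')) (.tens (tensList l) (tensList l'))
  | [], _ => (CEq.one_tens _).symm
  | a :: l, l' => (CEq.tensCongr (.refl a) (tensList_append l l')).trans (CEq.assoc a _ _).symm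

theorem CEq.tensList_perm {l l' : List CTy} (p : l.Perm l') : CEq (tensList l) (tensList l') := by
  induction p with
  | nil => exact .refl _
  | cons x _ ih => exact .tensCongr (.refl x) ih
  | swap x y l =>
    exact ((CEq.assoc y x _).symm.trans (.tensCongr (.comm y x) (.refl _))).trans (.assoc x y _)
  | trans _ _ ih ih' => exact ih.trans ih'

theorem CEq.tensList_of_perm_append {l l₁ l₂ : List CTy} (p : l.Perm (l₁ ++ l₂)) :
    CEq (tensList l) (.tens (tensList l₁) (tensList l₂)) :=
  (tensList_perm p).trans (tensList_append _ _)

theorem CEq.of_rel_factors : ∀ (σ : CTy) {l : List CTy},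
    Multiset.Rel CEq σ.factors l → CEq σ (tensList l)
  | .one, l, h => by
    rw [CTy.factors, Multiset.rel_zero_left, Multiset.coe_eq_zero] at h
    subst h
    exact .refl _
  | .tens σ ρ, l, h => by
    obtain ⟨s, t, hs, ht, e⟩ := Multiset.rel_add_left.mp h
    obtain ⟨l₁, l₂, p, rfl, rfl⟩ := Multiset.exists_perm_append_of_coe_eq_add e
    exact (CEq.tensCongr (of_rel_factors σ hs) (of_rel_factors ρ ht)).trans
      (tensList_of_perm_append p).symm
  | .arr a α, l, h => by
    rw [CTy.factors, ← Multiset.cons_zero, Multiset.rel_cons_left] at h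
    obtain ⟨b, _, hb, h0, e⟩ := h
    rw [Multiset.rel_zero_left.mp h0, Multiset.cons_zero, Multiset.coe_eq_singleton] at e
    subst e
    exact hb.trans (CEq.unit b).symm

theorem parList_cons (a : PTy) {l : List PTy} (h : l ≠ []) :
    parList (a :: l) = .par a (parList l) := by
  cases l with
  | nil => exact absurd rfl h
  | cons b t => rfl

theorem PEq.parList_append : ∀ {l l' : List PTy}, l ≠ [] → l' ≠ [] →
    PEq (parList (l ++ l')) (.par (parList l) (parList l'))
  | [], _, h, _ => absurd rfl h
  | [a], _, _, h' => by rw [List.singleton_append, parList_cons a h']; exact .refl _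
  | a :: b :: t, l', _, h' => by
    rw [List.cons_append, parList_cons a (by simp), parList_cons a (by simp)]
    exact (PEq.parCongr (.refl a) (parList_append (by simp) h')).trans (PEq.assoc _ _ _).symm

theorem PEq.parList_perm {l l' : List PTy} (p : l.Perm l') : PEq (parList l) (parList l') := by
  induction p with
  | nil => exact .refl _
  | @cons x l₁ l₂ p ih =>
    rcases eq_or_ne l₁ [] with rfl | h₁
    · rw [List.Perm.nil_eq p]; exact .refl _
    · rw [parList_cons x h₁, parList_cons x fun e => h₁ (e ▸ p).eq_nil]
      exact .parCongr (.refl x) ih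
  | swap x y l =>
    rcases eq_or_ne l [] with rfl | h
    · exact .comm y x
    rw [parList_cons y (by simp), parList_cons x h, parList_cons x (by simp), parList_cons y h]
    exact ((PEq.assoc y x _).symm.trans (.parCongr (.comm y x) (.refl _))).trans (.assoc x y _)
  | trans _ _ ih ih' => exact ih.trans ih'

theorem PEq.parList_of_perm_append {l l₁ l₂ : List PTy} (p : l.Perm (l₁ ++ l₂))
    (h₁ : l₁ ≠ []) (h₂ : l₂ ≠ []) : PEq (parList l) (.par (parList l₁) (parList l₂)) :=
  (parList_perm p).trans (parList_append h₁ h₂)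

theorem PTy.components_ne_zero : ∀ α : PTy, α.components ≠ 0
  | .ofC _ => by simp [components]
  | .par α _ => by simp [components, α.components_ne_zero]

theorem PEq.of_rel_components : ∀ (α : PTy) {l : List CTy},
    Multiset.Rel CEq α.components l → PEq α (parList (l.map .ofC))
  | .ofC τ, l, h => by
    rw [PTy.components, ← Multiset.cons_zero, Multiset.rel_cons_left] at h
    obtain ⟨b, _, hb, h0, e⟩ := h
    rw [Multiset.rel_zero_left.mp h0, Multiset.cons_zero, Multiset.coe_eq_singleton] at e
    subst e
    exact .ofC hb
  | .par α β, l, h => by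
    obtain ⟨s, t, hs, ht, e⟩ := Multiset.rel_add_left.mp h
    obtain ⟨l₁, l₂, p, rfl, rfl⟩ := Multiset.exists_perm_append_of_coe_eq_add e
    have ne : ∀ {γ : PTy} {l' : List CTy}, Multiset.Rel CEq γ.components l' →
        l'.map PTy.ofC ≠ [] := fun {γ} _ h' e' =>
      γ.components_ne_zero <| by simpa [List.map_eq_nil_iff.mp e'] using h'
    exact (PEq.parCongr (of_rel_components α hs) (of_rel_components β ht)).trans
      (parList_of_perm_append (by simpa using p.map PTy.ofC) (ne hs) (ne ht)).symm

theorem CEq.of_peq_ofC {σ τ : CTy} (h : PEq (.ofC σ) (.ofC τ)) : CEq σ τ :=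
  Multiset.rel_singleton_iff.mp h.rel_components

theorem CTy.factors_tensList {l : List CTy} (h : ∀ σ ∈ l, ∃ a α, σ = .arr a α) :
    (tensList l).factors = l := by
  induction l with
  | nil => rfl
  | cons σ l ih =>
    obtain ⟨a, α, rfl⟩ := h σ (by simp)
    simp [tensList_cons, factors, ih fun ρ hρ => h ρ (by simp [hρ])]

theorem PTy.components_parList_map {ι : Type*} (f : ι → CTy) {l : List ι} (h : l ≠ []) :
    (parList (l.map fun i => .ofC (f i))).components = (l.map f : Multiset CTy) := by
  induction l with
  | nil => exact absurd rfl h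
  | cons i l ih =>
    rcases eq_or_ne l [] with rfl | hl
    · rfl
    · rw [List.map_cons, parList_cons _ (by simpa using hl), components, ih hl]
      simp [components]

def ctxTensList (l : List Ctx) : Ctx := fun x => tensList (l.map (· x))

theorem tensCtxFin_eq_ctxTensList (n : ℕ) (Δ : Fin n → Ctx) :
    tensCtxFin n Δ = ctxTensList (List.ofFn Δ) := by
  funext x
  simp only [tensCtxFin, tensFin, ctxTensList, List.map_ofFn]
  rfl

theorem CtxEq.ctxTensList_singleton (A : Ctx) : CtxEq (ctxTensList [A]) A := fun _ => .unit _

theorem CtxEq.ctxTensList_of_perm_append {l l₁ l₂ : List Ctx} (p : l.Perm (l₁ ++ l₂)) :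
    CtxEq ((ctxTensList l₁).tens (ctxTensList l₂)) (ctxTensList l) :=
  fun x => (CEq.tensList_of_perm_append (by simpa using p.map (· x))).symm

/-- One `⊸I`-premise `Δ, x : dom ⊢ M : cod` of measure `size`. -/
structure LamBranch where
  ctx : Ctx
  dom : CTy
  cod : PTy
  size : ℕ

def LamBranch.arrow (b : LamBranch) : CTy := .arr b.dom b.cod

/-- One minor premise `Γ ⊢ N : ⅋ⱼ τⱼ` of `⊸E`, together with the arrows `τⱼ ⊸ αⱼ` it feeds. -/
structure AppBranch where
  ctx : Ctx
  size : ℕ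
  arrows : List (CTy × PTy)

namespace AppBranch

def funTy (b : AppBranch) : CTy := tensList (b.arrows.map fun p => .arr p.1 p.2)

def argTy (b : AppBranch) : PTy := parList (b.arrows.map fun p => .ofC p.1)

def resTy (b : AppBranch) : PTy := parList (b.arrows.map (·.2))

def weight (b : AppBranch) : ℕ := b.size + 2 * b.arrows.length

end AppBranch

def appFunTy (bs : List AppBranch) : PTy := parList (bs.map fun b => .ofC b.funTy)

def appResTy (bs : List AppBranch) : PTy := parList (bs.map (·.resTy))

theorem appFunTy_singleton (b : AppBranch) : appFunTy [b] = .ofC b.funTy := rfl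

theorem appResTy_singleton (b : AppBranch) : appResTy [b] = b.resTy := rfl

theorem Deriv.lam_of_list (L : List LamBranch) (M : Tm)
    (h : ∀ b ∈ L, Deriv (Ctx.cons b.dom b.ctx) M b.cod b.size) :
    Deriv (ctxTensList (L.map (·.ctx))) (.lam M) (.ofC (tensList (L.map (·.arrow))))
      (L.map (·.size)).sum := by
  have d := Deriv.lamI L.length (fun i => L[i.1].ctx) (fun i => L[i.1].dom)
    (fun i => L[i.1].cod) (fun i => L[i.1].size) M fun i => h _ (L.getElem_mem _)
  rwa [tensCtxFin_eq_ctxTensList, List.ofFn_getElem_eq_map L (·.ctx), tensFin,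
    List.ofFn_getElem_eq_map L fun b : LamBranch => CTy.arr b.dom b.cod, ← List.sum_ofFn,
    List.ofFn_getElem_eq_map L (·.size)] at d

theorem Deriv.app_of_list {Δ : Ctx} {M N : Tm} {m₀ : ℕ} (bs : List AppBranch) (hbs : bs ≠ [])
    (harr : ∀ b ∈ bs, b.arrows ≠ []) (hM : Deriv Δ M (appFunTy bs) m₀)
    (hN : ∀ b ∈ bs, Deriv b.ctx N b.argTy b.size) :
    Deriv (Δ.tens (ctxTensList (bs.map (·.ctx)))) (.app M N) (appResTy bs)
      (m₀ + (bs.map (·.weight)).sum - 1) := by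
  have ofFn_arrows (b : AppBranch) {β : Type} (f : CTy × PTy → β) :
      List.ofFn (fun j : Fin b.arrows.length => f b.arrows[j.1]) = b.arrows.map f :=
    List.ofFn_getElem_eq_map _ _
  have d := Deriv.appE bs.length (List.length_pos_iff.mpr hbs) (fun i => bs[i.1].arrows.length)
    (fun i => List.length_pos_iff.mpr (harr _ (bs.getElem_mem _)))
    (fun i j => bs[i.1].arrows[j.1].1) (fun i j => bs[i.1].arrows[j.1].2) Δ
    (fun i => bs[i.1].ctx) m₀ (fun i => bs[i.1].size) M N
    (by
      simp only [parFin, tensFin, ofFn_arrows _ fun p => CTy.arr p.1 p.2]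
      exact (List.ofFn_getElem_eq_map bs fun b => PTy.ofC b.funTy) ▸ hM)
    (fun i => by
      simp only [parFin, ofFn_arrows _ fun p => PTy.ofC p.1]
      exact hN _ (bs.getElem_mem _))
  simp only [parFin, ofFn_arrows _ Prod.snd, tensCtxFin_eq_ctxTensList,
    List.ofFn_getElem_eq_map bs (·.ctx)] at d
  convert d using 2
  · exact congrArg parList (List.ofFn_getElem_eq_map bs AppBranch.resTy).symm
  · rw [add_assoc, ← Finset.sum_add_distrib, ← List.sum_ofFn,
      List.ofFn_getElem_eq_map bs fun b => b.size + 2 * b.arrows.length]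
    rfl

namespace Deriv

variable {Γ : Ctx} {α : PTy} {m : ℕ}

theorem var_inv {x : ℕ} (h : Deriv Γ (.var x) α m) :
    m = 0 ∧ ∃ τ, PEq (.ofC τ) α ∧ CtxEq (Ctx.single x τ) Γ := by
  generalize e : Tm.var x = P at h
  induction h with
  | ax y τ => cases e; exact ⟨rfl, τ, .refl _, .refl _⟩
  | eqv _ hc hp ih =>
    obtain ⟨hm, τ, hpe, hce⟩ := ih e
    exact ⟨hm, τ, hpe.trans hp, hce.trans hc⟩
  | _ => cases e

theorem lam_inv {M : Tm} (h : Deriv Γ (.lam M) α m) :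
    ∃ L : List LamBranch, (∀ b ∈ L, Deriv (Ctx.cons b.dom b.ctx) M b.cod b.size) ∧
      CtxEq (ctxTensList (L.map (·.ctx))) Γ ∧ PEq (.ofC (tensList (L.map (·.arrow)))) α ∧
      m = (L.map (·.size)).sum := by
  generalize e : Tm.lam M = P at h
  induction h with
  | lamI n Δ τ α ms _ hprem =>
    cases e
    refine ⟨List.ofFn fun i => ⟨Δ i, τ i, α i, ms i⟩, ?_, ?_, ?_, ?_⟩
    · simpa [List.mem_ofFn] using hprem
    · rw [tensCtxFin_eq_ctxTensList, List.map_ofFn]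
      exact .refl _
    · rw [List.map_ofFn]
      exact .refl _
    · rw [List.map_ofFn, List.sum_ofFn]
      rfl
  | eqv _ hc hp ih =>
    obtain ⟨L, hL, hce, hpe, hm⟩ := ih e
    exact ⟨L, hL, hce.trans hc, hpe.trans hp, hm⟩
  | _ => cases e

theorem plus_inv {M N : Tm} (h : Deriv Γ (.plus M N) α m) :
    ∃ m', m = m' + 1 ∧ (Deriv Γ M α m' ∨ Deriv Γ N α m') := by
  generalize e : Tm.plus M N = P at h
  induction h with
  | plusL _ d => cases e; exact ⟨_, rfl, .inl d⟩
  | plusR _ d => cases e; exact ⟨_, rfl, .inr d⟩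
  | eqv _ hc hp ih =>
    obtain ⟨m', hm, hd⟩ := ih e
    exact ⟨m', hm, hd.imp (·.eqv hc hp) (·.eqv hc hp)⟩
  | _ => cases e

theorem par_inv {M N : Tm} (h : Deriv Γ (.par M N) α m) :
    ∃ Δ₁ Δ₂ β₁ β₂ m₁ m₂, Deriv Δ₁ M β₁ m₁ ∧ Deriv Δ₂ N β₂ m₂ ∧
      CtxEq (Δ₁.tens Δ₂) Γ ∧ PEq (.par β₁ β₂) α ∧ m = m₁ + m₂ := by
  generalize e : Tm.par M N = P at h
  induction h with
  | parI d₁ d₂ => cases e; exact ⟨_, _, _, _, _, _, d₁, d₂, .refl _, .refl _, rfl⟩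
  | eqv _ hc hp ih =>
    obtain ⟨Δ₁, Δ₂, β₁, β₂, m₁, m₂, d₁, d₂, hce, hpe, hm⟩ := ih e
    exact ⟨Δ₁, Δ₂, β₁, β₂, m₁, m₂, d₁, d₂, hce.trans hc, hpe.trans hp, hm⟩
  | _ => cases e

theorem app_inv {M N : Tm} (h : Deriv Γ (.app M N) α m) :
    ∃ (Δ : Ctx) (bs : List AppBranch) (m₀ : ℕ), bs ≠ [] ∧ (∀ b ∈ bs, b.arrows ≠ []) ∧
      Deriv Δ M (appFunTy bs) m₀ ∧ (∀ b ∈ bs, Deriv b.ctx N b.argTy b.size) ∧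
      CtxEq (Δ.tens (ctxTensList (bs.map (·.ctx)))) Γ ∧ PEq (appResTy bs) α ∧
      m = m₀ + (bs.map (·.weight)).sum - 1 := by
  generalize e : Tm.app M N = P at h
  induction h with
  | appE k hk nf hn τ α Δ Γs m₀ ms _ _ hM hN =>
    cases e
    refine ⟨Δ, List.ofFn fun i => ⟨Γs i, ms i, List.ofFn fun j => (τ i j, α i j)⟩, m₀,
      ?_, ?_, ?_, ?_, ?_, ?_, ?_⟩
    · simpa [List.ofFn_eq_nil_iff] using hk.ne'
    · simpa [List.mem_ofFn, List.ofFn_eq_nil_iff] using fun i => (hn i).ne'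
    · convert hM using 1
      simp [appFunTy, AppBranch.funTy, List.map_ofFn, parFin, tensFin, Function.comp_def]
    · simpa [List.mem_ofFn, AppBranch.argTy, List.map_ofFn, parFin, Function.comp_def] using hN
    · rw [tensCtxFin_eq_ctxTensList, List.map_ofFn]
      exact .refl _
    · simp only [appResTy, AppBranch.resTy, List.map_ofFn, Function.comp_def]
      exact .refl _
    · simp [AppBranch.weight, List.map_ofFn, List.sum_ofFn, Function.comp_def,
        Finset.sum_add_distrib, add_assoc]
  | eqv _ hc hp ih =>
    obtain ⟨Δ, bs, m₀, hbs, harr, hM, hN, hce, hpe, hm⟩ := ih e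
    exact ⟨Δ, bs, m₀, hbs, harr, hM, hN, hce.trans hc, hpe.trans hp, hm⟩
  | _ => cases e

end Deriv

theorem CEq.exists_split_tensList {ι : Type*} {f : ι → CTy} (hf : ∀ i, ∃ a α, f i = .arr a α)
    {L : List ι} {σ₁ σ₂ : CTy} (h : CEq (tensList (L.map f)) (.tens σ₁ σ₂)) :
    ∃ L₁ L₂, L.Perm (L₁ ++ L₂) ∧ CEq (tensList (L₁.map f)) σ₁ ∧ CEq (tensList (L₂.map f)) σ₂ := by
  have hL : ∀ σ ∈ L.map f, ∃ a α, σ = .arr a α := by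
    simpa only [List.mem_map, forall_exists_index, and_imp, forall_apply_eq_imp_iff₂] using
      fun i _ => hf i
  have h' := h.rel_factors
  rw [CTy.factors_tensList hL, CTy.factors] at h'
  obtain ⟨L₁, L₂, p, h₁, h₂⟩ := List.exists_perm_append_of_rel_map_add h'
  have back : ∀ {σ : CTy} {l : List CTy}, Multiset.Rel ArrowEq (l : Multiset CTy) σ.factors →
      CEq (tensList l) σ := fun {σ} _ h =>
    (CEq.of_rel_factors σ ((h.symm_of ArrowEq.symm).mono fun _ _ _ _ => ArrowEq.ceq)).symm
  exact ⟨L₁, L₂, p, back h₁, back h₂⟩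

theorem PEq.exists_split_parList {ι : Type*} {f : ι → CTy} {L : List ι} (hL : L ≠ [])
    {β₁ β₂ : PTy} (h : PEq (.par β₁ β₂) (parList (L.map fun i => .ofC (f i)))) :
    ∃ L₁ L₂, L.Perm (L₁ ++ L₂) ∧ L₁ ≠ [] ∧ L₂ ≠ [] ∧
      PEq β₁ (parList (L₁.map fun i => .ofC (f i))) ∧
      PEq β₂ (parList (L₂.map fun i => .ofC (f i))) := by
  have h' := h.rel_components.symm_of CEq.symm
  rw [PTy.components_parList_map f hL, PTy.components] at h'
  obtain ⟨L₁, L₂, p, h₁, h₂⟩ := List.exists_perm_append_of_rel_map_add h'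
  have forth : ∀ {β : PTy} {L' : List ι}, Multiset.Rel CEq (L'.map f : Multiset CTy) β.components →
      L' ≠ [] ∧ PEq β (parList (L'.map fun i => .ofC (f i))) := fun {β} L' h => by
    refine ⟨fun e => β.components_ne_zero ?_, ?_⟩
    · simpa [e] using h.symm_of CEq.symm
    · simpa [Function.comp_def] using PEq.of_rel_components β (h.symm_of CEq.symm)
  exact ⟨L₁, L₂, p, (forth h₁).1, (forth h₂).1, (forth h₁).2, (forth h₂).2⟩

theorem IsValue.var_or_lam {V : Tm} (h : IsValue V) : (∃ x, V = .var x) ∨ ∃ M, V = .lam M := by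
  cases V <;> simp_all [IsValue]

namespace Deriv

variable {Θ : Ctx} {V : Tm} {m : ℕ}

theorem components_card_eq_one_of_isValue {α : PTy} (hV : IsValue V) (hd : Deriv Θ V α m) :
    Multiset.card α.components = 1 := by
  obtain ⟨σ, hσ⟩ : ∃ σ, PEq (.ofC σ) α := by
    rcases hV.var_or_lam with ⟨x, rfl⟩ | ⟨M, rfl⟩
    · obtain ⟨_, τ, h, _⟩ := hd.var_inv
      exact ⟨τ, h⟩
    · obtain ⟨_, _, _, h, _⟩ := hd.lam_inv
      exact ⟨_, h⟩
  simpa [PTy.components] using (Multiset.card_eq_card_of_rel hσ.rel_components).symm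

theorem eq_zero_of_isValue_of_ceq_one {σ : CTy} (hV : IsValue V) (hd : Deriv Θ V (.ofC σ) m)
    (h1 : CEq σ .one) : m = 0 ∧ CtxEq Ctx.empty Θ := by
  rcases hV.var_or_lam with ⟨x, rfl⟩ | ⟨M, rfl⟩
  · obtain ⟨rfl, τ, hτ, hce⟩ := hd.var_inv
    refine ⟨rfl, CtxEq.trans (fun n => ?_) hce⟩
    unfold Ctx.single
    split
    · exact ((CEq.of_peq_ofC hτ).trans h1).symm
    · exact .refl _
  · obtain ⟨L, -, hce, hty, rfl⟩ := hd.lam_inv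
    have h0 := ((CEq.of_peq_ofC hty).trans h1).rel_factors
    rw [CTy.factors_tensList (by simp [LamBranch.arrow]), CTy.factors, Multiset.rel_zero_right,
      Multiset.coe_eq_zero, List.map_eq_nil_iff] at h0
    subst h0
    exact ⟨rfl, hce⟩

theorem split_of_isValue {σ σ₁ σ₂ : CTy} (hV : IsValue V) (hd : Deriv Θ V (.ofC σ) m)
    (he : CEq σ (.tens σ₁ σ₂)) :
    ∃ Θ₁ Θ₂ m₁ m₂, Deriv Θ₁ V (.ofC σ₁) m₁ ∧ Deriv Θ₂ V (.ofC σ₂) m₂ ∧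
      CtxEq (Θ₁.tens Θ₂) Θ ∧ m = m₁ + m₂ := by
  rcases hV.var_or_lam with ⟨x, rfl⟩ | ⟨M, rfl⟩
  · obtain ⟨rfl, τ, hτ, hce⟩ := hd.var_inv
    refine ⟨_, _, 0, 0, .ax x σ₁, .ax x σ₂, CtxEq.trans (fun n => ?_) hce, rfl⟩
    unfold Ctx.tens Ctx.single
    split
    · exact ((CEq.of_peq_ofC hτ).trans he).symm
    · exact .unit _
  · obtain ⟨L, hprem, hce, hty, rfl⟩ := hd.lam_inv
    obtain ⟨L₁, L₂, p, h₁, h₂⟩ :=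
      CEq.exists_split_tensList (fun b => ⟨_, _, rfl⟩) ((CEq.of_peq_ofC hty).trans he)
    have hmem : ∀ b ∈ L₁ ++ L₂, b ∈ L := fun b hb => p.mem_iff.mpr hb
    refine ⟨_, _, _, _,
      (lam_of_list L₁ M fun b hb => hprem b (hmem b (List.mem_append_left _ hb))).eqv
        (.refl _) (.ofC h₁),
      (lam_of_list L₂ M fun b hb => hprem b (hmem b (List.mem_append_right _ hb))).eqv
        (.refl _) (.ofC h₂),
      (CtxEq.ctxTensList_of_perm_append (by simpa using p.map (·.ctx))).trans hce, ?_⟩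
    simpa using (p.map (·.size)).sum_eq

end Deriv

theorem tensFin_succ {n : ℕ} (f : Fin (n + 1) → CTy) :
    tensFin (n + 1) f = .tens (f 0) (tensFin n fun i => f i.succ) := by
  rw [tensFin, List.ofFn_succ]
  rfl

theorem CEq.tensFin_tens {n : ℕ} (f g : Fin n → CTy) :
    CEq (tensFin n fun i => .tens (f i) (g i)) (.tens (tensFin n f) (tensFin n g)) := by
  induction n with
  | zero => exact (CEq.unit _).symm
  | succ n ih =>
    rw [tensFin_succ, tensFin_succ, tensFin_succ]
    exact (CEq.tensCongr (.refl _) (ih _ _)).trans (CEq.tens_tens_tens_comm _ _ _ _)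

theorem CEq.tensFin_one (n : ℕ) : CEq (tensFin n fun _ => .one) .one := by
  induction n with
  | zero => exact .refl _
  | succ n ih =>
    rw [tensFin_succ]
    exact (CEq.tensCongr (.refl _) ih).trans (CEq.unit _)

theorem CtxEq.tensCtxFin_tens {n : ℕ} (A B : Fin n → Ctx) :
    CtxEq (tensCtxFin n fun i => (A i).tens (B i)) ((tensCtxFin n A).tens (tensCtxFin n B)) :=
  fun _ => CEq.tensFin_tens _ _

theorem Deriv.split_of_isValue_tensFin {V : Tm} (hV : IsValue V) :
    ∀ {n : ℕ} {σ : Fin n → CTy} {Θ : Ctx} {m : ℕ}, Deriv Θ V (.ofC (tensFin n σ)) m →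
      ∃ (Θs : Fin n → Ctx) (ms : Fin n → ℕ), (∀ i, Deriv (Θs i) V (.ofC (σ i)) (ms i)) ∧
        CtxEq (tensCtxFin n Θs) Θ ∧ ∑ i, ms i = m
  | 0, _, _, _, hd => by
    obtain ⟨rfl, hce⟩ := hd.eq_zero_of_isValue_of_ceq_one hV (.refl _)
    exact ⟨Fin.elim0, Fin.elim0, fun i => i.elim0, hce, rfl⟩
  | n + 1, σ, _, _, hd => by
    rw [tensFin_succ] at hd
    obtain ⟨Θ₀, Θ', m₀, m', d₀, d', hce, rfl⟩ := hd.split_of_isValue hV (.refl _)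
    obtain ⟨Θs, ms, hds, hce', rfl⟩ := split_of_isValue_tensFin hV d'
    refine ⟨Fin.cons Θ₀ Θs, Fin.cons m₀ ms, Fin.cases d₀ hds, ?_, by simp [Fin.sum_univ_succ]⟩
    refine CtxEq.trans (fun x => ?_) hce
    simp only [tensCtxFin, tensFin_succ, Fin.cons_zero, Fin.cons_succ]
    exact .tensCongr (.refl _) (hce' x)

/-- The context of `shiftTm c M`. -/
def Ctx.shift (c : ℕ) (Γ : Ctx) : Ctx := fun n =>
  if n < c then Γ n else if n = c then .one else Γ (n - 1)

/-- The context of `substTm M k V`, less the context of `V`. -/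
def Ctx.erase (k : ℕ) (Γ : Ctx) : Ctx := fun n => if n < k then Γ n else Γ (n + 1)

namespace Ctx

theorem shift_cons (c : ℕ) (τ : CTy) (Δ : Ctx) :
    (Ctx.cons τ Δ).shift (c + 1) = Ctx.cons τ (Δ.shift c) := by
  funext n
  rcases n with _ | n
  · rfl
  · simp only [shift, cons, Nat.add_lt_add_iff_right, Nat.add_right_cancel_iff]
    split_ifs
    · rfl
    · rfl
    · obtain ⟨k, rfl⟩ : ∃ k, n = k + 1 := ⟨n - 1, by omega⟩
      rfl

theorem shift_zero (Θ : Ctx) : Θ.shift 0 = Ctx.cons .one Θ := by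
  funext n
  rcases n with _ | n <;> rfl

theorem erase_cons (k : ℕ) (τ : CTy) (Δ : Ctx) :
    (Ctx.cons τ Δ).erase (k + 1) = Ctx.cons τ (Δ.erase k) := by
  funext n
  rcases n with _ | n
  · rfl
  · simp [erase, cons]

theorem erase_tens (k : ℕ) (A B : Ctx) : (A.tens B).erase k = (A.erase k).tens (B.erase k) := by
  funext n
  simp only [erase, tens]
  split_ifs <;> rfl

theorem erase_tensCtxFin (k n : ℕ) (Δ : Fin n → Ctx) :
    (tensCtxFin n Δ).erase k = tensCtxFin n fun i => (Δ i).erase k := by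
  funext x
  simp only [erase, tensCtxFin]
  split_ifs <;> rfl

theorem tens_cons (a b : CTy) (A B : Ctx) :
    (Ctx.cons a A).tens (Ctx.cons b B) = Ctx.cons (.tens a b) (A.tens B) := by
  funext n
  rcases n with _ | n <;> rfl

end Ctx

theorem CtxEq.cons {a b : CTy} {A B : Ctx} (h : CEq a b) (h' : CtxEq A B) :
    CtxEq (Ctx.cons a A) (Ctx.cons b B)
  | 0 => h
  | n + 1 => h' n

theorem CtxEq.shift (c : ℕ) {A B : Ctx} (h : CtxEq A B) : CtxEq (A.shift c) (B.shift c) := by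
  intro x
  unfold Ctx.shift
  split_ifs
  · exact h x
  · exact .refl _
  · exact h _

theorem CtxEq.tens_shift (c : ℕ) (A B : Ctx) :
    CtxEq ((A.shift c).tens (B.shift c)) ((A.tens B).shift c) := by
  intro x
  simp only [Ctx.shift, Ctx.tens]
  split_ifs
  · exact .refl _
  · exact .unit _
  · exact .refl _

theorem CtxEq.tensCtxFin_shift {n : ℕ} (c : ℕ) (Δ : Fin n → Ctx) :
    CtxEq (tensCtxFin n fun i => (Δ i).shift c) ((tensCtxFin n Δ).shift c) := by
  intro x
  simp only [Ctx.shift, tensCtxFin]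
  split_ifs
  · exact .refl _
  · exact CEq.tensFin_one n
  · exact .refl _

theorem IsValue.shiftTm {V : Tm} (c : ℕ) (h : IsValue V) : IsValue (shiftTm c V) := by
  rcases h.var_or_lam with ⟨x, rfl⟩ | ⟨M, rfl⟩
  · simp only [_root_.shiftTm]
    split <;> trivial
  · trivial

theorem Deriv.shift {Γ : Ctx} {M : Tm} {α : PTy} {m : ℕ} (h : Deriv Γ M α m) (c : ℕ) :
    Deriv (Γ.shift c) (shiftTm c M) α m := by
  induction h generalizing c with
  | ax x τ =>
    unfold shiftTm
    split_ifs
    all_goals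
      refine (Deriv.ax _ τ).eqv (fun n => ?_) (.refl _)
      unfold Ctx.shift Ctx.single
      split_ifs <;> first | exact .refl _ | omega
  | lamI n Δ τ α ms M _ ih =>
    refine (Deriv.lamI n (fun i => (Δ i).shift c) τ α ms _ fun i => ?_).eqv
      (CtxEq.tensCtxFin_shift c Δ) (.refl _)
    simpa only [Ctx.shift_cons] using ih i (c + 1)
  | appE k hk nf hn τ α Δ Γs m₀ ms M N _ _ ihM ihN =>
    refine (Deriv.appE k hk nf hn τ α _ (fun i => (Γs i).shift c) m₀ ms _ _ (ihM c)
      fun i => ihN i c).eqv ?_ (.refl _)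
    exact ((CtxEq.refl _).tens (CtxEq.tensCtxFin_shift c Γs)).trans (CtxEq.tens_shift c _ _)
  | plusL N _ ih => exact .plusL _ (ih c)
  | plusR M _ ih => exact .plusR _ (ih c)
  | parI _ _ ih₁ ih₂ => exact (Deriv.parI (ih₁ c) (ih₂ c)).eqv (CtxEq.tens_shift c _ _) (.refl _)
  | eqv _ hc hp ih => exact (ih c).eqv (hc.shift c) hp

theorem Deriv.subst_var {x k : ℕ} {τ : CTy} {Θ : Ctx} {V : Tm} {m : ℕ} (hV : IsValue V)
    (hd : Deriv Θ V (.ofC (Ctx.single x τ k)) m) :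
    Deriv (((Ctx.single x τ).erase k).tens Θ) (substTm (.var x) k V) (.ofC τ) m := by
  by_cases hxk : x = k
  · subst hxk
    rw [show substTm (.var x) x V = V by simp [substTm]]
    refine (show Deriv Θ V (.ofC τ) m by simpa [Ctx.single] using hd).eqv (fun n => ?_) (.refl _)
    have e : (Ctx.single x τ).erase x n = .one := by
      unfold Ctx.erase Ctx.single
      split_ifs <;> first | rfl | omega
    show CEq _ (.tens _ _)
    rw [e]
    exact (CEq.one_tens _).symm
  · have h1 : CEq (Ctx.single x τ k) .one := by simp [Ctx.single, Ne.symm hxk]; exact .refl _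
    obtain ⟨rfl, hΘ⟩ := hd.eq_zero_of_isValue_of_ceq_one hV h1
    have hvar : ∀ y, (∀ n, (Ctx.single x τ).erase k n = Ctx.single y τ n) →
        Deriv (((Ctx.single x τ).erase k).tens Θ) (.var y) (.ofC τ) 0 := fun y e =>
      (Deriv.ax y τ).eqv (fun n => by
        show CEq _ (.tens _ _)
        rw [e n]
        exact ((CEq.tensCongr (.refl _) (hΘ n).symm).trans (.unit _)).symm) (.refl _)
    unfold substTm
    split_ifs
    all_goals
      refine hvar _ fun n => ?_
      unfold Ctx.erase Ctx.single
      split_ifs <;> first | rfl | omega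

theorem CtxEq.erase (k : ℕ) {A B : Ctx} (h : CtxEq A B) : CtxEq (A.erase k) (B.erase k) := by
  intro x
  unfold Ctx.erase
  split_ifs <;> exact h _

theorem two_le_sum_two_mul {k : ℕ} (hk : 0 < k) {nf : Fin k → ℕ} (hn : ∀ i, 0 < nf i) :
    2 ≤ ∑ i, 2 * nf i :=
  calc 2 ≤ 2 * nf ⟨0, hk⟩ := by have := hn ⟨0, hk⟩; omega
    _ ≤ ∑ i, 2 * nf i := Finset.single_le_sum (f := fun i => 2 * nf i) (fun _ _ => Nat.zero_le _)
        (Finset.mem_univ _)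

theorem Deriv.subst {Γ : Ctx} {M : Tm} {α : PTy} {m : ℕ} (h : Deriv Γ M α m) {k : ℕ} {V : Tm}
    {Θ : Ctx} {mv : ℕ} (hV : IsValue V) (hdV : Deriv Θ V (.ofC (Γ k)) mv) :
    Deriv ((Γ.erase k).tens Θ) (substTm M k V) α (m + mv) := by
  induction h generalizing k V Θ mv with
  | ax x τ => simpa using Deriv.subst_var hV hdV
  | lamI n Δ τ α ms M _ ih =>
    obtain ⟨Θs, mvs, hds, hce, rfl⟩ :=
      split_of_isValue_tensFin hV (hdV : Deriv Θ V (.ofC (tensFin n fun i => Δ i k)) mv)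
    have premise : ∀ i, Deriv (Ctx.cons (τ i) (((Δ i).erase k).tens (Θs i)))
        (substTm M (k + 1) (shiftTm 0 V)) (α i) (ms i + mvs i) := fun i => by
      have d := ih i (k := k + 1) (hV.shiftTm 0) ((hds i).shift 0)
      rw [Ctx.erase_cons, Ctx.shift_zero, Ctx.tens_cons] at d
      exact d.eqv (CtxEq.cons (.unit _) (.refl _)) (.refl _)
    have d := Deriv.lamI n _ τ α _ _ premise
    rw [Finset.sum_add_distrib] at d
    refine d.eqv ?_ (.refl _)
    rw [Ctx.erase_tensCtxFin]
    exact (CtxEq.tensCtxFin_tens _ _).trans ((CtxEq.refl _).tens hce)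
  | appE n hn nf hnf τ α Δ Γs m₀ ms M N _ _ ihM ihN =>
    obtain ⟨Θ₀, Θ₁, mv₀, mv₁, d₀, d₁, hce, rfl⟩ := hdV.split_of_isValue hV (.refl _)
    obtain ⟨Θs, mvs, hds, hce₁, rfl⟩ :=
      split_of_isValue_tensFin hV (d₁ : Deriv Θ₁ V (.ofC (tensFin n fun i => Γs i k)) _)
    have d := Deriv.appE n hn nf hnf τ α _ _ _ _ _ _ (ihM hV d₀) fun i => ihN i hV (hds i)
    have e : m₀ + mv₀ + ∑ i, (ms i + mvs i) + ∑ i, 2 * nf i - 1 =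
        m₀ + ∑ i, ms i + ∑ i, 2 * nf i - 1 + (mv₀ + ∑ i, mvs i) := by
      have := two_le_sum_two_mul hn hnf
      rw [Finset.sum_add_distrib]
      omega
    rw [e] at d
    refine d.eqv ?_ (.refl _)
    rw [Ctx.erase_tens, Ctx.erase_tensCtxFin]
    refine (((CtxEq.refl _).tens (CtxEq.tensCtxFin_tens _ _)).trans
      (CtxEq.tens_tens_tens_comm _ _ _ _)).trans ((CtxEq.refl _).tens ?_)
    exact ((CtxEq.refl _).tens hce₁).trans hce
  | plusL N _ ih =>
    simpa [substTm, Nat.add_right_comm] using Deriv.plusL (substTm N k V) (ih hV hdV)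
  | plusR M _ ih =>
    simpa [substTm, Nat.add_right_comm] using Deriv.plusR (substTm M k V) (ih hV hdV)
  | parI _ _ ih₁ ih₂ =>
    obtain ⟨Θ₀, Θ₁, mv₀, mv₁, d₀, d₁, hce, rfl⟩ := hdV.split_of_isValue hV (.refl _)
    have d := Deriv.parI (ih₁ hV d₀) (ih₂ hV d₁)
    rw [add_add_add_comm] at d
    refine d.eqv ?_ (.refl _)
    rw [Ctx.erase_tens]
    exact (CtxEq.tens_tens_tens_comm _ _ _ _).trans ((CtxEq.refl _).tens hce)
  | eqv _ hc hp ih =>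
    exact (ih hV (hdV.eqv (.refl _) (.ofC (hc k).symm))).eqv ((hc.erase k).tens (.refl _)) hp

theorem AppBranch.two_le_weight {b : AppBranch} (h : b.arrows ≠ []) : 2 ≤ b.weight := by
  have := List.length_pos_iff.mpr h
  unfold weight
  omega

theorem AppBranch.two_le_sum_weight {bs : List AppBranch} (hbs : bs ≠ [])
    (harr : ∀ b ∈ bs, b.arrows ≠ []) : 2 ≤ (bs.map (·.weight)).sum := by
  obtain ⟨b, bs, rfl⟩ := List.exists_cons_of_ne_nil hbs
  have := two_le_weight (harr b (by simp))
  simp only [List.map_cons, List.sum_cons]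
  omega

namespace Deriv

variable {Θ : Ctx} {V : Tm} {m : ℕ}

theorem eq_singleton_of_isValue {bs : List AppBranch} (hV : IsValue V)
    (hd : Deriv Θ V (appFunTy bs) m) (hbs : bs ≠ []) : ∃ b, bs = [b] := by
  have h := hd.components_card_eq_one_of_isValue hV
  rw [appFunTy, PTy.components_parList_map _ hbs] at h
  simpa [List.length_eq_one_iff] using h

theorem arrows_eq_singleton_of_isValue {b : AppBranch} (hV : IsValue V)
    (hd : Deriv Θ V b.argTy m) (hb : b.arrows ≠ []) : ∃ p, b.arrows = [p] := by
  have h := hd.components_card_eq_one_of_isValue hV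
  rw [AppBranch.argTy, PTy.components_parList_map _ hb] at h
  simpa [List.length_eq_one_iff] using h

theorem lam_inv_arrow {Δ : Ctx} {M : Tm} {a : CTy} {β : PTy}
    (h : Deriv Δ (.lam M) (.ofC (tensList [.arr a β])) m) :
    ∃ Δ', Deriv (Ctx.cons a Δ') M β m ∧ CtxEq Δ' Δ := by
  obtain ⟨L, hprem, hce, hty, rfl⟩ := h.lam_inv
  have h' := (CEq.of_peq_ofC hty).rel_factors
  rw [CTy.factors_tensList (by simp [LamBranch.arrow]), CTy.factors_tensList (by simp)] at h'
  obtain ⟨q, rfl⟩ : ∃ q, L = [q] :=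
    List.length_eq_one_iff.mp (by simpa using Multiset.card_eq_card_of_rel h')
  simp only [List.map_cons, List.map_nil, Multiset.coe_singleton, Multiset.rel_singleton_iff] at h'
  obtain ⟨hdom, hcod⟩ : CEq q.dom a ∧ PEq q.cod β := h'
  refine ⟨q.ctx, ?_, (CtxEq.ctxTensList_singleton _).symm.trans hce⟩
  simpa using (hprem q (by simp)).eqv (CtxEq.cons hdom (.refl _)) hcod

end Deriv

/-- `S` is a set so that a `+`-redex, which has two contracta, goes through the same
congruence lemmas as the other redexes. -/
def DecreasesTo (M : Tm) (S : Set Tm) : Prop :=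
  ∀ ⦃Γ α m⦄, Deriv Γ M α m → ∃ N ∈ S, ∃ m', Deriv Γ N α m' ∧ m = m' + 1

namespace DecreasesTo

variable {M N : Tm} {S : Set Tm}

theorem par_left (h : DecreasesTo M S) (N : Tm) : DecreasesTo (.par M N) ((Tm.par · N) '' S) := by
  intro Γ α m hd
  obtain ⟨_, _, _, _, _, _, d₁, d₂, hce, hpe, rfl⟩ := hd.par_inv
  obtain ⟨M', hM', _, d, rfl⟩ := h d₁
  exact ⟨_, ⟨M', hM', rfl⟩, _, (Deriv.parI d d₂).eqv hce hpe, by omega⟩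

theorem par_right (h : DecreasesTo N S) (M : Tm) : DecreasesTo (.par M N) ((Tm.par M ·) '' S) := by
  intro Γ α m hd
  obtain ⟨_, _, _, _, _, _, d₁, d₂, hce, hpe, rfl⟩ := hd.par_inv
  obtain ⟨N', hN', _, d, rfl⟩ := h d₂
  exact ⟨_, ⟨N', hN', rfl⟩, _, (Deriv.parI d₁ d).eqv hce hpe, by omega⟩

theorem app_left (h : DecreasesTo M S) (N : Tm) : DecreasesTo (.app M N) ((Tm.app · N) '' S) := by
  intro Γ α m hd
  obtain ⟨_, bs, _, hbs, harr, hM, hN, hce, hpe, rfl⟩ := hd.app_inv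
  obtain ⟨M', hM', _, d, rfl⟩ := h hM
  have := AppBranch.two_le_sum_weight hbs harr
  exact ⟨_, ⟨M', hM', rfl⟩, _, (Deriv.app_of_list bs hbs harr d hN).eqv hce hpe, by omega⟩

theorem app_right {V : Tm} (hV : IsValue V) (h : DecreasesTo N S) :
    DecreasesTo (.app V N) ((Tm.app V ·) '' S) := by
  intro Γ α m hd
  obtain ⟨_, bs, _, hbs, harr, hM, hN, hce, hpe, rfl⟩ := hd.app_inv
  obtain ⟨b, rfl⟩ := hM.eq_singleton_of_isValue hV hbs
  obtain ⟨N', hN', k, d, hk⟩ := h (hN b (by simp))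
  have hb := harr b (by simp)
  have := AppBranch.two_le_weight hb
  refine ⟨_, ⟨N', hN', rfl⟩, _,
    (Deriv.app_of_list [⟨b.ctx, k, b.arrows⟩] (by simp) (by simpa using hb) hM
      (by simp only [List.mem_singleton, forall_eq]; exact d)).eqv hce hpe, ?_⟩
  simp only [List.map_cons, List.map_nil, List.sum_singleton, AppBranch.weight] at this ⊢
  omega

end DecreasesTo

theorem decreasesTo_plus (M N : Tm) : DecreasesTo (.plus M N) {M, N} := by
  intro Γ α m hd
  obtain ⟨m', rfl, d | d⟩ := hd.plus_inv
  · exact ⟨M, .inl rfl, m', d, rfl⟩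
  · exact ⟨N, .inr rfl, m', d, rfl⟩

theorem decreasesTo_beta (M : Tm) {V : Tm} (hV : IsValue V) :
    DecreasesTo (.app (.lam M) V) {substTm M 0 V} := by
  intro Γ α m hd
  obtain ⟨Δ, bs, m₀, hbs, harr, hM, hN, hce, hpe, rfl⟩ := hd.app_inv
  obtain ⟨b, rfl⟩ := hM.eq_singleton_of_isValue (show IsValue (.lam M) from trivial) hbs
  have dN := hN b (by simp)
  obtain ⟨p, hp⟩ := dN.arrows_eq_singleton_of_isValue hV (harr b (by simp))
  rw [appFunTy_singleton, AppBranch.funTy, hp, List.map_singleton] at hM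
  obtain ⟨Δ', dM, hΔ⟩ := hM.lam_inv_arrow
  have dV : Deriv b.ctx V (.ofC p.1) b.size := by simpa [AppBranch.argTy, hp, parList] using dN
  have d := dM.subst (k := 0) hV dV
  refine ⟨_, rfl, _, d.eqv ((hΔ.tens (CtxEq.ctxTensList_singleton _).symm).trans hce) ?_, ?_⟩
  · simpa [appResTy_singleton, AppBranch.resTy, hp, parList] using hpe
  · simp [AppBranch.weight, hp]
    omega

theorem decreasesTo_parApp_left (M N P : Tm) :
    DecreasesTo (.app (.par M N) P) {.par (.app M P) (.app N P)} := by
  intro Γ α m hd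
  obtain ⟨Δ, bs, m₀, hbs, harr, hM, hN, hce, hpe, rfl⟩ := hd.app_inv
  obtain ⟨Δ₁, Δ₂, β₁, β₂, m₁, m₂, d₁, d₂, hce', hpe', rfl⟩ := hM.par_inv
  obtain ⟨bs₁, bs₂, p, hbs₁, hbs₂, e₁, e₂⟩ := PEq.exists_split_parList hbs hpe'
  have hmem : ∀ b ∈ bs₁ ++ bs₂, b ∈ bs := fun b hb => p.mem_iff.mpr hb
  have harr₁ : ∀ b ∈ bs₁, b.arrows ≠ [] := fun b hb => harr b (hmem b (by simp [hb]))
  have harr₂ : ∀ b ∈ bs₂, b.arrows ≠ [] := fun b hb => harr b (hmem b (by simp [hb]))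
  have dA := Deriv.app_of_list bs₁ hbs₁ harr₁ (d₁.eqv (.refl _) e₁)
    fun b hb => hN b (hmem b (by simp [hb]))
  have dB := Deriv.app_of_list bs₂ hbs₂ harr₂ (d₂.eqv (.refl _) e₂)
    fun b hb => hN b (hmem b (by simp [hb]))
  refine ⟨_, rfl, _, (Deriv.parI dA dB).eqv ?_ ?_, ?_⟩
  · exact (CtxEq.tens_tens_tens_comm _ _ _ _).trans
      ((hce'.tens (CtxEq.ctxTensList_of_perm_append (by simpa using p.map (·.ctx)))).trans hce)
  · refine (PEq.parList_of_perm_append ?_ (by simpa using hbs₁) (by simpa using hbs₂)).symm.trans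
      hpe
    simpa using p.map AppBranch.resTy
  · have hW : (bs.map (·.weight)).sum = (bs₁.map (·.weight)).sum + (bs₂.map (·.weight)).sum := by
      simpa using (p.map (·.weight)).sum_eq
    have := AppBranch.two_le_sum_weight hbs₁ harr₁
    have := AppBranch.two_le_sum_weight hbs₂ harr₂
    omega

theorem decreasesTo_parApp_right {V : Tm} (hV : IsValue V) (M N : Tm) :
    DecreasesTo (.app V (.par M N)) {.par (.app V M) (.app V N)} := by
  intro Γ α m hd
  obtain ⟨Δ, bs, m₀, hbs, harr, hM, hN, hce, hpe, rfl⟩ := hd.app_inv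
  obtain ⟨b, rfl⟩ := hM.eq_singleton_of_isValue hV hbs
  obtain ⟨Δ₁, Δ₂, β₁, β₂, m₁, m₂, d₁, d₂, hce', hpe', hm⟩ := (hN b (by simp)).par_inv
  obtain ⟨as₁, as₂, p, has₁, has₂, e₁, e₂⟩ :=
    PEq.exists_split_parList (harr b (by simp)) hpe'
  let b₁ : AppBranch := ⟨Δ₁, m₁, as₁⟩
  let b₂ : AppBranch := ⟨Δ₂, m₂, as₂⟩
  obtain ⟨Θ₁, Θ₂, n₁, n₂, dV₁, dV₂, hΘ, rfl⟩ := hM.split_of_isValue hV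
    (σ₁ := b₁.funTy) (σ₂ := b₂.funTy) (CEq.tensList_of_perm_append (by simpa using p.map _))
  have dA := Deriv.app_of_list [b₁] (by simp) (by simpa using has₁) dV₁
    (by simp only [List.mem_singleton, forall_eq]; exact d₁.eqv (.refl _) e₁)
  have dB := Deriv.app_of_list [b₂] (by simp) (by simpa using has₂) dV₂
    (by simp only [List.mem_singleton, forall_eq]; exact d₂.eqv (.refl _) e₂)
  refine ⟨_, rfl, _, (Deriv.parI dA dB).eqv ?_ ?_, ?_⟩
  · refine (CtxEq.tens_tens_tens_comm _ _ _ _).trans (CtxEq.trans ?_ hce)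
    refine hΘ.tens (((CtxEq.ctxTensList_singleton _).tens (CtxEq.ctxTensList_singleton _)).trans
      (hce'.trans (CtxEq.ctxTensList_singleton _).symm))
  · exact (PEq.parList_of_perm_append (l := b.arrows.map Prod.snd) (l₁ := as₁.map Prod.snd)
      (l₂ := as₂.map Prod.snd) (by simpa using p.map Prod.snd) (by simpa using has₁)
      (by simpa using has₂)).symm.trans hpe
  · have hl : b.arrows.length = as₁.length + as₂.length := by simpa using p.length_eq
    have := List.length_pos_iff.mpr has₁
    have := List.length_pos_iff.mpr has₂
    simp only [List.map_cons, List.map_nil, List.sum_singleton, AppBranch.weight, b₁, b₂, hm, hl]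
    omega

theorem Step.decreasesTo {b : Bool} {M N : Tm} (h : Step b M N) (hb : b = false) :
    DecreasesTo M {N} := by
  induction h with
  | beta hV => exact decreasesTo_beta _ hV
  | plusL | plusR => cases hb
  | parAppL M N P => exact decreasesTo_parApp_left M N P
  | parAppR M N hV => exact decreasesTo_parApp_right hV M N
  | parL N _ ih => simpa using (ih hb).par_left N
  | parR M _ ih => simpa using (ih hb).par_right M
  | appL N _ _ ih => simpa using (ih hb).app_left N
  | appR hV _ _ ih => simpa using (ih hb).app_right hV

theorem PlusPair.decreasesTo {M N₁ N₂ : Tm} (h : PlusPair M N₁ N₂) : DecreasesTo M {N₁, N₂} := by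
  induction h with
  | base M N => exact decreasesTo_plus M N
  | parL N _ ih => simpa [Set.image_pair] using ih.par_left N
  | parR M _ ih => simpa [Set.image_pair] using ih.par_right M
  | appL N _ _ ih => simpa [Set.image_pair] using ih.app_left N
  | appR hV _ _ ih => simpa [Set.image_pair] using ih.app_right hV

theorem subject_reduction (Δ : Ctx) (M : Tm) (α : PTy) (m : ℕ)
    (hπ : Deriv Δ M α m) :
    (∀ N, Step false M N → ∃ m', Deriv Δ N α m' ∧ m = m' + 1) ∧
    (∀ N₁ N₂, PlusPair M N₁ N₂ →
      ∃ m', (Deriv Δ N₁ α m' ∨ Deriv Δ N₂ α m') ∧ m = m' + 1) := by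
  refine ⟨fun N h => ?_, fun N₁ N₂ h => ?_⟩
  · obtain ⟨_, rfl, m', d, hm⟩ := h.decreasesTo rfl hπ
    exact ⟨m', d, hm⟩
  · obtain ⟨N, hN, m', d, hm⟩ := h.decreasesTo hπ
    rcases hN with rfl | rfl
    · exact ⟨m', .inl d, hm⟩
    · exact ⟨m', .inr d, hm⟩
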